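/- For the Mozes game on the Ẽ₈ graph starting from the position x = (1,0,0,0,0,0,0,0,0) (value 1 at node 0, zero elsewhere), every position reachable by legal moves has at least one node with strictly positive value; in particular, from any reachable position a legal move is always possible and the game never terminates. -/
import Mathlib


/-- Adjacency in the affine `Ẽ₈` graph on vertices `{0, …, 8}`: edges `{i, i+1}`
for `1 ≤ i ≤ 7`, together with the edge `{0, 3}`. -/
def adjE8 (i j : Fin 9) : Prop :=
  (1 ≤ (i : ℕ) ∧ (j : ℕ) = (i : ℕ) + 1) ∨ (1 ≤ (j : ℕ) ∧ (i : ℕ) = (j : ℕ) + 1) ∨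
  (i = 0 ∧ j = 3) ∨ (i = 3 ∧ j = 0)

instance : DecidableRel adjE8 := fun i j => by unfold adjE8; infer_instance

/-- The Mozes move at node `i`: negate `xᵢ` and add `xᵢ` to each adjacent node. -/
def mozesMove (x : Fin 9 → ℝ) (i : Fin 9) : Fin 9 → ℝ :=
  fun j => if j = i then -x i else if adjE8 i j then x j + x i else x j

/-- One legal step of the game: a move at some node with strictly positive value. -/
def mozesStep (x y : Fin 9 → ℝ) : Prop :=
  ∃ i, 0 < x i ∧ y = mozesMove x i

/-- The invariant linear functional `I(x) = 3x₀+2x₁+4x₂+6x₃+5x₄+4x₅+3x₆+2x₇+x₈`. -/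
def IFun (x : Fin 9 → ℝ) : ℝ :=
  3*x 0 + 2*x 1 + 4*x 2 + 6*x 3 + 5*x 4 + 4*x 5 + 3*x 6 + 2*x 7 + x 8

lemma IFun_move (x : Fin 9 → ℝ) (i : Fin 9) : IFun (mozesMove x i) = IFun x := by
  fin_cases i <;>
    · simp only [IFun, mozesMove]
      norm_num [adjE8, Fin.ext_iff,
        show ((0:Fin 9):ℕ) = 0 from rfl, show ((1:Fin 9):ℕ) = 1 from rfl,
        show ((2:Fin 9):ℕ) = 2 from rfl, show ((3:Fin 9):ℕ) = 3 from rfl,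
        show ((4:Fin 9):ℕ) = 4 from rfl, show ((5:Fin 9):ℕ) = 5 from rfl,
        show ((6:Fin 9):ℕ) = 6 from rfl, show ((7:Fin 9):ℕ) = 7 from rfl,
        show ((8:Fin 9):ℕ) = 8 from rfl]
      try simp only [show ∀ h : 2 < 9, (⟨2,h⟩ : Fin 9) = 2 from fun _ => rfl,
        show ∀ h : 3 < 9, (⟨3,h⟩ : Fin 9) = 3 from fun _ => rfl,
        show ∀ h : 4 < 9, (⟨4,h⟩ : Fin 9) = 4 from fun _ => rfl,
        show ∀ h : 5 < 9, (⟨5,h⟩ : Fin 9) = 5 from fun _ => rfl,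
        show ∀ h : 6 < 9, (⟨6,h⟩ : Fin 9) = 6 from fun _ => rfl,
        show ∀ h : 7 < 9, (⟨7,h⟩ : Fin 9) = 7 from fun _ => rfl,
        show ∀ h : 8 < 9, (⟨8,h⟩ : Fin 9) = 8 from fun _ => rfl]
      ring

lemma IFun_step {x y : Fin 9 → ℝ} (h : mozesStep x y) : IFun y = IFun x := by
  obtain ⟨i, _, rfl⟩ := h; exact IFun_move x i

/-- starting from `(1,0,…,0)`, every position reachable by legal
Mozes moves on `Ẽ₈` has a node with strictly positive value; in particular a
legal move is always possible from any reachable position. -/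
theorem stmt11 :
    ∀ y : Fin 9 → ℝ,
      Relation.ReflTransGen mozesStep (![1, 0, 0, 0, 0, 0, 0, 0, 0]) y →
      (∃ i, 0 < y i) ∧ (∃ z, mozesStep y z) := by
  intro y h
  have hI : IFun y = 3 := by
    induction h with
    | refl =>
        norm_num [IFun,
          show (![1,0,0,0,0,0,0,0,0] : Fin 9 → ℝ) 0 = 1 from rfl,
          show (![1,0,0,0,0,0,0,0,0] : Fin 9 → ℝ) 1 = 0 from rfl,
          show (![1,0,0,0,0,0,0,0,0] : Fin 9 → ℝ) 2 = 0 from rfl,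
          show (![1,0,0,0,0,0,0,0,0] : Fin 9 → ℝ) 3 = 0 from rfl,
          show (![1,0,0,0,0,0,0,0,0] : Fin 9 → ℝ) 4 = 0 from rfl,
          show (![1,0,0,0,0,0,0,0,0] : Fin 9 → ℝ) 5 = 0 from rfl,
          show (![1,0,0,0,0,0,0,0,0] : Fin 9 → ℝ) 6 = 0 from rfl,
          show (![1,0,0,0,0,0,0,0,0] : Fin 9 → ℝ) 7 = 0 from rfl,
          show (![1,0,0,0,0,0,0,0,0] : Fin 9 → ℝ) 8 = 0 from rfl]
    | tail _ hs ih => rw [IFun_step hs, ih]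
  have hpos : ∃ i, 0 < y i := by
    by_contra hc
    push_neg at hc
    have : IFun y ≤ 0 := by
      have h0 := hc 0; have h1 := hc 1; have h2 := hc 2; have h3 := hc 3
      have h4 := hc 4; have h5 := hc 5; have h6 := hc 6; have h7 := hc 7
      have h8 := hc 8
      unfold IFun; linarith
    linarith
  refine ⟨hpos, ?_⟩
  obtain ⟨i, hi⟩ := hpos
  exact ⟨mozesMove y i, i, hi, rfl⟩
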